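/- Let φ be a substitution over a finite alphabet A whose incidence matrix has at least one eigenvalue of modulus less than 1, and let u be a bidirectional fixed point of φ. Then there exists a non-trivial geometric representation of u (positive lengths ℓ_a, not all equal) which is bounded distance equivalent to a lattice. -/

import Mathlib

/-- `φ` is a substitution: a non-erasing morphism (given by its values on letters)
with letters `a`, `b` such that `φ(a) = a·w` and `φ(b) = v·b` for nonempty `w`, `v`. -/
def IsSubstitution {A : Type*} (φ : A → List A) : Prop :=
  (∀ a : A, φ a ≠ []) ∧
  (∃ a : A, ∃ w : List A, w ≠ [] ∧ φ a = a :: w) ∧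
  (∃ b : A, ∃ v : List A, v ≠ [] ∧ φ b = v ++ [b])

/-- `u : ℤ → A` is a bidirectional fixed point of `φ`. -/
def IsBidirFixedPoint {A : Type*} (φ : A → List A) (u : ℤ → A) : Prop :=
  ∃ k : ℤ → ℤ, k 0 = 0 ∧
    (∀ n : ℤ, k (n + 1) = k n + (φ (u n)).length) ∧
    (∀ n : ℤ, (List.range (φ (u n)).length).map (fun j => u (k n + j)) = φ (u n))

/-- Signed Parikh count (the `a`-entry of the signed Parikh vector `P[n]`). -/
def sCount {A : Type*} [DecidableEq A] (u : ℤ → A) (a : A) (n : ℤ) : ℤ :=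
  if 0 ≤ n then (((List.range n.toNat).map (fun k => u k)).count a : ℤ)
  else -((((List.range (-n).toNat).map (fun k => u (n + k))).count a : ℤ))

/-- `Λ` is bounded distance equivalent to `L`. -/
def BDEquiv (Λ L : Set ℝ) : Prop :=
  ∃ C > 0, ∃ g : Λ → L, Function.Bijective g ∧ ∀ x : Λ, |(x : ℝ) - (g x : ℝ)| < C

/-- The one-dimensional lattice `ηℤ`. -/
def lat (η : ℝ) : Set ℝ := {x : ℝ | ∃ n : ℤ, x = η * n}

/-!
Let `w` be a left eigenvector of the incidence matrix for an eigenvalue `μ` with `|μ| < 1`, and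
`f n = ∑ₐ wₐ P[n]ₐ`. Because `u` is fixed by `φ`, `u[0, k m) = φ(u[0, m))` for suitable positions
`k m`, so `f (k m) = μ f m`. Every `n` lies in a block `[k m, k (m + 1))`
of bounded length with `|m| ≤ |n|`, and `f` has bounded increments, so `‖f n‖ ≤ C + |μ| ‖f m‖`,
which makes `f` bounded. The real or imaginary part of `w` is then a nonzero real weight with
bounded `f`; it cannot be constant (else `f n` would be a nonzero multiple of `n`), and shifting it
by a large constant `T` gives positive lengths with `x_n = T n + O(1)`, at bounded distance from
`Tℤ`.
-/

open scoped Matrix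

section SignedParikh

variable {A : Type*} [DecidableEq A] (u : ℤ → A)

lemma sCount_eq_count (a : A) (n : ℤ) : sCount u a n =
    if 0 ≤ n then (((List.range n.toNat).map fun k : ℕ => u k).count a : ℤ)
    else -(((List.range (-n).toNat).map fun k : ℕ => u (n + k)).count a : ℤ) := by
  simp only [sCount, bind_pure_comp, List.map_eq_map, List.map_map, Function.comp_def]

lemma sCount_zero (a : A) : sCount u a 0 = 0 := by
  simp [sCount_eq_count]

lemma sCount_succ (a : A) (n : ℤ) :
    sCount u a (n + 1) = sCount u a n + if u n = a then 1 else 0 := by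
  rcases le_or_gt 0 n with hn | hn
  · have hsucc : (n + 1).toNat = n.toNat + 1 := by omega
    simp [sCount_eq_count, hn, show 0 ≤ n + 1 by omega, hsucc, List.range_succ,
      List.count_singleton']
  · have hpred : (-n).toNat = (-(n + 1)).toNat + 1 := by omega
    have hshift : (fun k : ℕ => u (n + (k + 1 : ℕ))) = fun k : ℕ => u (n + 1 + k) := by
      funext k; push_cast; ring_nf
    rw [sCount_eq_count, sCount_eq_count, if_neg (show ¬0 ≤ n by omega), hpred,
      List.range_succ_eq_map, List.map_cons, List.map_map, Function.comp_def, hshift,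
      List.count_cons]
    rcases eq_or_lt_of_le (show n + 1 ≤ 0 by omega) with h | h
    · simp [show n = -1 by omega]
    · rw [if_neg (show ¬0 ≤ n + 1 by omega)]
      split_ifs <;> simp_all

lemma sCount_add_natCast (a : A) (p : ℤ) (L : ℕ) :
    sCount u a (p + L) =
      sCount u a p + ((List.range L).map fun j : ℕ => u (p + j)).count a := by
  induction L with
  | zero => simp
  | succ L ih =>
    rw [Nat.cast_succ, ← add_assoc, sCount_succ, ih, List.range_succ, List.map_append,
      List.count_append]
    simp [List.count_singleton', add_assoc]

end SignedParikh

lemma Int.eq_of_sub_succ_eq {G : Type*} [AddCommGroup G] {F H : ℤ → G} (h₀ : F 0 = H 0)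
    (hs : ∀ m, F (m + 1) - F m = H (m + 1) - H m) (m : ℤ) : F m = H m := by
  induction m using Int.induction_on with
  | zero => exact h₀
  | succ i ih => rw [← sub_add_cancel (F _) (F i), hs, ih, sub_add_cancel]
  | pred i ih =>
    have h := hs (-i - 1)
    rw [sub_add_cancel] at h
    rw [← sub_sub_cancel (F (-i)) (F _), h, ih, sub_sub_cancel]

section WeightedParikh

variable {A : Type*} [Fintype A] [DecidableEq A] {R : Type*} [CommRing R]

/-- The point `x_n = ∑ₐ ℓₐ P[n]ₐ` of the geometric representation of `u` with lengths `ℓ`. -/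
def weightedParikh (u : ℤ → A) (w : A → R) (n : ℤ) : R :=
  ∑ a, w a * (sCount u a n : R)

variable (u : ℤ → A)

lemma weightedParikh_zero (w : A → R) : weightedParikh u w 0 = 0 := by
  simp [weightedParikh, sCount_zero]

lemma weightedParikh_succ (w : A → R) (n : ℤ) :
    weightedParikh u w (n + 1) = weightedParikh u w n + w (u n) := by
  simp [weightedParikh, sCount_succ, mul_add, Finset.sum_add_distrib]

lemma weightedParikh_add_natCast (w : A → R) (p : ℤ) (L : ℕ) :
    weightedParikh u w (p + L) = weightedParikh u w p +
      ∑ a, w a * (((List.range L).map fun j : ℕ => u (p + j)).count a : R) := by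
  simp [weightedParikh, sCount_add_natCast, mul_add, Finset.sum_add_distrib]

lemma weightedParikh_const (c : R) (n : ℤ) :
    weightedParikh u (fun _ => c) n = c * n := by
  refine Int.eq_of_sub_succ_eq (F := weightedParikh u fun _ => c) (H := fun n => c * n)
    (by simp [weightedParikh_zero]) (fun m => ?_) n
  simp [weightedParikh_succ, mul_add]

lemma weightedParikh_const_add (c : R) (w : A → R) (n : ℤ) :
    weightedParikh u (fun a => c + w a) n = c * n + weightedParikh u w n := by
  rw [← weightedParikh_const u c n]
  simp [weightedParikh, add_mul, Finset.sum_add_distrib]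

lemma weightedParikh_smul (c : R) (w : A → R) (n : ℤ) :
    weightedParikh u (c • w) n = c * weightedParikh u w n := by
  simp [weightedParikh, Finset.mul_sum, mul_assoc]

lemma strictMono_weightedParikh {w : A → ℝ} (hw : ∀ a, 0 < w a) :
    StrictMono (weightedParikh u w) :=
  strictMono_int_of_lt_succ fun n => by
    rw [weightedParikh_succ]
    linarith [hw (u n)]

lemma re_weightedParikh (w : A → ℂ) (n : ℤ) :
    (weightedParikh u w n).re = weightedParikh u (fun a => (w a).re) n := by
  simp [weightedParikh, Complex.re_sum]

lemma im_weightedParikh (w : A → ℂ) (n : ℤ) :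
    (weightedParikh u w n).im = weightedParikh u (fun a => (w a).im) n := by
  simp [weightedParikh, Complex.im_sum]

/-- Since `u[k m, k (m + 1)) = φ (u m)`, the Parikh vector at `k m` is the incidence matrix applied
to the Parikh vector at `m`. -/
lemma weightedParikh_comp_of_fixedPoint {φ : A → List A} {k : ℤ → ℤ} (hk₀ : k 0 = 0)
    (hk : ∀ n, k (n + 1) = k n + (φ (u n)).length)
    (hblock : ∀ n, (List.range (φ (u n)).length).map (fun j : ℕ => u (k n + j)) = φ (u n))
    (w : A → R) (m : ℤ) :
    weightedParikh u w (k m) =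
      weightedParikh u (w ᵥ* Matrix.of fun b a => ((φ a).count b : R)) m := by
  refine Int.eq_of_sub_succ_eq (F := fun m => weightedParikh u w (k m)) (by simp [hk₀,
    weightedParikh_zero]) (fun m => ?_) m
  simp only [hk, weightedParikh_add_natCast, hblock, weightedParikh_succ, add_sub_cancel_left]
  simp [Matrix.vecMul, dotProduct]

end WeightedParikh

section Contraction

lemma exists_le_lt_succ_natAbs_le {k : ℤ → ℤ} (hk₀ : k 0 = 0) (hk : ∀ m, k m < k (m + 1))
    (n : ℤ) : ∃ m, k m ≤ n ∧ n < k (m + 1) ∧ m.natAbs ≤ n.natAbs := by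
  have hmono : Monotone fun m => k m - m := monotone_int_of_le_succ fun m => by
    have := hk m; omega
  have hpos : ∀ m, 0 ≤ m → m ≤ k m := fun m hm => by have := hmono hm; simp_all
  have hneg : ∀ m, m ≤ 0 → k m ≤ m := fun m hm => by have := hmono hm; simp_all
  obtain ⟨m, hm, hmax⟩ := Int.exists_greatest_of_bdd (P := fun m => k m ≤ n)
    ⟨max n 0, fun z hz => by by_contra! h; have := hpos z (by omega); omega⟩
    ⟨min n 0, by have := hneg (min n 0) (by omega); omega⟩
  have hlow : min n 0 ≤ m := hmax _ (by have := hneg (min n 0) (by omega); omega)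
  have hup : m ≤ max n 0 := by by_contra! h; have := hpos m (by omega); omega
  exact ⟨m, hm, by by_contra! h; have := hmax _ h; omega, by omega⟩

/-- Apply the hypothesis at a maximiser of `g` on `[-|n|, |n|]`, an interval that `σ` preserves. -/
lemma le_div_one_sub_of_le_add_mul_comp {g : ℤ → ℝ} {σ : ℤ → ℤ} {C ρ : ℝ}
    (hσ : ∀ n, (σ n).natAbs ≤ n.natAbs) (hρ₀ : 0 ≤ ρ) (hρ₁ : ρ < 1)
    (hg : ∀ n, g n ≤ C + ρ * g (σ n)) (n : ℤ) : g n ≤ C / (1 - ρ) := by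
  have hmem : ∀ m, m ∈ Finset.Icc (-(n.natAbs : ℤ)) n.natAbs ↔ m.natAbs ≤ n.natAbs := by
    intro m; rw [Finset.mem_Icc]; omega
  obtain ⟨n₀, hn₀, hmax⟩ := (Finset.Icc (-(n.natAbs : ℤ)) n.natAbs).exists_max_image g
    ⟨n, (hmem n).2 le_rfl⟩
  have hself : g n₀ ≤ C + ρ * g n₀ :=
    (hg n₀).trans (by gcongr; exact hmax _ ((hmem _).2 ((hσ n₀).trans ((hmem _).1 hn₀))))
  calc g n ≤ g n₀ := hmax n ((hmem n).2 le_rfl)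
    _ ≤ C / (1 - ρ) := by rw [le_div_iff₀ (by linarith)]; linarith

lemma norm_sub_le_mul_of_norm_sub_succ_le {E : Type*} [SeminormedAddGroup E] {f : ℤ → E}
    {W : ℝ} (hf : ∀ n, ‖f (n + 1) - f n‖ ≤ W) (p : ℤ) (j : ℕ) :
    ‖f (p + j) - f p‖ ≤ j * W := by
  induction j with
  | zero => simp
  | succ j ih =>
    calc ‖f (p + (j + 1 : ℕ)) - f p‖ ≤ ‖f (p + j + 1) - f (p + j)‖ + ‖f (p + j) - f p‖ := by
          rw [Nat.cast_succ, ← add_assoc]; exact norm_sub_le_norm_sub_add_norm_sub _ _ _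
      _ ≤ (j + 1 : ℕ) * W := by push_cast; linarith [hf (p + j)]

lemma norm_le_of_norm_comp_le {E : Type*} [SeminormedAddGroup E] {f : ℤ → E} {k : ℤ → ℤ}
    {L : ℕ} {W ρ : ℝ} (hk₀ : k 0 = 0) (hk : ∀ m, k m < k (m + 1))
    (hkL : ∀ m, k (m + 1) ≤ k m + L) (hf : ∀ n, ‖f (n + 1) - f n‖ ≤ W)
    (hfk : ∀ m, ‖f (k m)‖ ≤ ρ * ‖f m‖) (hρ₀ : 0 ≤ ρ) (hρ₁ : ρ < 1) (n : ℤ) :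
    ‖f n‖ ≤ L * W / (1 - ρ) := by
  choose σ hσk hσk' hσ using exists_le_lt_succ_natAbs_le hk₀ hk
  have hW : 0 ≤ W := (norm_nonneg _).trans (hf 0)
  refine le_div_one_sub_of_le_add_mul_comp (g := fun n => ‖f n‖) hσ hρ₀ hρ₁ (fun n => ?_) n
  obtain ⟨j, hj⟩ : ∃ j : ℕ, n = k (σ n) + j := ⟨(n - k (σ n)).toNat, by have := hσk n; omega⟩
  have hjL : (j : ℝ) ≤ L := by have := hσk' n; have := hkL (σ n); exact_mod_cast (by omega)
  calc ‖f n‖ ≤ ‖f (k (σ n))‖ + ‖f n - f (k (σ n))‖ := norm_le_norm_add_norm_sub' _ _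
    _ ≤ ρ * ‖f (σ n)‖ + j * W := by
        gcongr
        · exact hfk _
        · have := norm_sub_le_mul_of_norm_sub_succ_le hf (k (σ n)) j
          rwa [← hj] at this
    _ ≤ L * W + ρ * ‖f (σ n)‖ := by linarith [mul_le_mul_of_nonneg_right hjL hW]

end Contraction

lemma Matrix.exists_vecMul_eq_smul_of_mulVec_eq_smul {n K : Type*} [Fintype n] [DecidableEq n]
    [Field K] {M : Matrix n n K} {μ : K} {v : n → K} (hv : v ≠ 0) (hMv : M *ᵥ v = μ • v) :
    ∃ w ≠ 0, w ᵥ* M = μ • w := by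
  have hdet : (M - μ • 1).det = 0 := Matrix.exists_mulVec_eq_zero_iff.1
    ⟨v, hv, by rw [Matrix.sub_mulVec, Matrix.smul_mulVec, Matrix.one_mulVec, hMv, sub_self]⟩
  obtain ⟨w, hw, hwM⟩ := Matrix.exists_vecMul_eq_zero_iff.2 hdet
  refine ⟨w, hw, ?_⟩
  rwa [Matrix.vecMul_sub, Matrix.vecMul_smul, Matrix.vecMul_one, sub_eq_zero] at hwM

lemma IsBidirFixedPoint.norm_weightedParikh_le {A 𝕜 : Type*} [Fintype A] [DecidableEq A]
    [NormedField 𝕜] {φ : A → List A} (hφ : ∀ a, φ a ≠ []) {u : ℤ → A}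
    (hu : IsBidirFixedPoint φ u) {μ : 𝕜} (hμ : ‖μ‖ < 1) {w : A → 𝕜}
    (hw : w ᵥ* Matrix.of (fun b a => ((φ a).count b : 𝕜)) = μ • w) :
    ∃ B, ∀ n, ‖weightedParikh u w n‖ ≤ B := by
  obtain ⟨k, hk₀, hk, hblock⟩ := hu
  simp only [bind_pure_comp, List.map_eq_map, List.map_map, Function.comp_def] at hblock
  have hlen : ∀ a, (φ a).length ≤ Finset.univ.sup fun a => (φ a).length :=
    fun a => Finset.le_sup (f := fun a => (φ a).length) (Finset.mem_univ a)
  refine ⟨_, norm_le_of_norm_comp_le (L := Finset.univ.sup fun a => (φ a).length) (W := ‖w‖) hk₀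
    (fun m => ?_) (fun m => ?_) (fun n => ?_) (fun m => ?_) (norm_nonneg μ) hμ⟩
  · have := List.length_pos_iff.2 (hφ (u m)); rw [hk]; omega
  · have := hlen (u m); rw [hk]; omega
  · rw [weightedParikh_succ, add_sub_cancel_left]; exact norm_le_pi_norm w (u n)
  · rw [weightedParikh_comp_of_fixedPoint u hk₀ hk hblock, hw, weightedParikh_smul, norm_mul]

section Representation

lemma eq_zero_of_forall_abs_mul_intCast_le {c B : ℝ} (h : ∀ n : ℤ, |c * n| ≤ B) : c = 0 := by
  by_contra hc
  obtain ⟨n, hn⟩ := exists_nat_gt (B / |c|)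
  have := h n
  rw [div_lt_iff₀ (abs_pos.2 hc)] at hn
  rw [abs_mul, Int.cast_natCast, Nat.abs_cast] at this
  linarith

lemma bdEquiv_of_injective {X Y : ℤ → ℝ} (hX : Function.Injective X) (hY : Function.Injective Y)
    {B : ℝ} (hB : ∀ n, |X n - Y n| ≤ B) :
    BDEquiv {x | ∃ n, x = X n} {y | ∃ n, y = Y n} := by
  have hrange : ∀ Z : ℤ → ℝ, {x | ∃ n, x = Z n} = Set.range Z := fun Z => by
    ext; simp [eq_comm]
  rw [hrange, hrange]
  refine ⟨B + 1, by linarith [(abs_nonneg _).trans (hB 0)],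
    (Equiv.ofInjective X hX).symm.trans (Equiv.ofInjective Y hY), Equiv.bijective _, ?_⟩
  rintro ⟨_, n, rfl⟩
  simp only [Equiv.trans_apply, Equiv.ofInjective_symm_apply, Equiv.ofInjective_apply]
  linarith [hB n]

variable {A : Type*} [Fintype A] [DecidableEq A] (u : ℤ → A)

lemma exists_ne_of_abs_weightedParikh_le {w : A → ℝ} (hw : w ≠ 0) {B : ℝ}
    (hB : ∀ n, |weightedParikh u w n| ≤ B) : ∃ a b, w a ≠ w b := by
  by_contra! hconst
  obtain ⟨a₀, ha₀⟩ := Function.ne_iff.1 hw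
  rw [show w = fun _ => w a₀ from funext fun a => hconst a a₀] at hB
  exact ha₀ (eq_zero_of_forall_abs_mul_intCast_le fun n => by
    simpa [weightedParikh_const] using hB n)

/-- The lengths are `T + w` for a constant `T` making them positive, so that `x_n = T n + O(1)`. -/
lemma exists_nontrivial_bdl_of_abs_weightedParikh_le {w : A → ℝ} (hw : w ≠ 0) {B : ℝ}
    (hB : ∀ n, |weightedParikh u w n| ≤ B) :
    ∃ ℓ : A → ℝ, (∀ a, 0 < ℓ a) ∧ (∃ a b, ℓ a ≠ ℓ b) ∧
      ∃ η > 0, BDEquiv {x | ∃ n, x = weightedParikh u ℓ n} (lat η) := by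
  set T := 1 + ∑ a, |w a|
  have hℓ : ∀ a, 0 < T + w a := fun a => by
    have := Finset.single_le_sum (f := fun a => |w a|) (fun a _ => abs_nonneg _)
      (Finset.mem_univ a)
    linarith [neg_abs_le (w a)]
  have hT : 0 < T := by positivity
  obtain ⟨a, b, hab⟩ := exists_ne_of_abs_weightedParikh_le u hw hB
  refine ⟨fun a => T + w a, hℓ, ⟨a, b, by simpa using hab⟩, T, hT, ?_⟩
  refine bdEquiv_of_injective (strictMono_weightedParikh u hℓ).injective
    (fun m n h => by exact_mod_cast mul_left_cancel₀ hT.ne' h) (B := B) fun n => ?_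
  rw [weightedParikh_const_add, add_sub_cancel_left]
  exact hB n

end Representation

/-- if the incidence matrix of a substitution `φ` has an eigenvalue
of modulus `< 1`, then any bidirectional fixed point `u` of `φ` has a non-trivial
geometric representation (positive lengths, not all equal) which is bounded
distance equivalent to a lattice. -/
theorem nontrivial_bdl_representation_of_fixed_point {A : Type*} [Fintype A]
    [DecidableEq A] (φ : A → List A) (hφ : IsSubstitution φ)
    (heig : ∃ μ : ℂ, ‖μ‖ < 1 ∧ ∃ v : A → ℂ, v ≠ 0 ∧
      (Matrix.of fun b a : A => ((φ a).count b : ℂ)).mulVec v = μ • v)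
    (u : ℤ → A) (hu : IsBidirFixedPoint φ u) :
    ∃ ℓ : A → ℝ, (∀ a : A, 0 < ℓ a) ∧ (∃ a b : A, ℓ a ≠ ℓ b) ∧
      ∃ η > 0, BDEquiv {x : ℝ | ∃ n : ℤ, x = ∑ a : A, ℓ a * (sCount u a n : ℝ)}
        (lat η) := by
  obtain ⟨μ, hμ, v, hv, hMv⟩ := heig
  obtain ⟨w, hw, hwM⟩ := Matrix.exists_vecMul_eq_smul_of_mulVec_eq_smul hv hMv
  obtain ⟨B, hB⟩ := hu.norm_weightedParikh_le hφ.1 hμ hwM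
  by_cases hre : (fun a => (w a).re) = 0
  · refine exists_nontrivial_bdl_of_abs_weightedParikh_le u (w := fun a => (w a).im) (B := B)
      (fun him => hw (funext fun a => Complex.ext (congrFun hre a) (congrFun him a))) fun n => ?_
    rw [← im_weightedParikh]
    exact (Complex.abs_im_le_norm _).trans (hB n)
  · refine exists_nontrivial_bdl_of_abs_weightedParikh_le u hre (B := B) fun n => ?_
    rw [← re_weightedParikh]
    exact (Complex.abs_re_le_norm _).trans (hB n)
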